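/- In the setting of the maxmax rationalisability corollary, define γ to be 'maxmin rationalisable' if min_{b ∈ A_{-i}} S(u_s(a⁰,b), u_p(a⁰,b), γ) ≥ min_{b ∈ A_{-i}} S(u_s(a',b), u_p(a',b), γ) for all a' ∈ A_i. Then for every interval I ∈ P_ns, either all γ ∈ I are maxmin rationalisable or none are. -/
import Mathlib


/-- Satisficing (lexicographic-threshold) scalarization. -/
noncomputable def S (x y γ : ℝ) : ℝ := if x ≤ γ then x else y

/-- The partition cell of `[-1,1]` whose closed left endpoint is `c`. -/
def cell (E : Finset ℝ) (c : ℝ) : Set ℝ :=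
  {x | x ∈ Set.Icc (-1:ℝ) 1 ∧ c ≤ x ∧ ∀ c' ∈ E, c' ≤ x → c' ≤ c}

/-- The partition of `[-1,1]` induced by endpoint set `E`. -/
def partitionOf (E : Finset ℝ) : Set (Set ℝ) := {I | ∃ c ∈ E, I = cell E c}

/-- `γ` is maxmin rationalisable for observed action `a0`: the worst-case
scalarized utility of `a0` over opponent actions is at least that of every
alternative. -/
noncomputable def MaxminRationalisable {Ai Am : Type*} [Fintype Am] [Nonempty Am]
    (us up : Ai × Am → ℝ) (a0 : Ai) (γ : ℝ) : Prop :=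
  ∀ a' : Ai,
    Finset.univ.inf' Finset.univ_nonempty (fun b => S (us (a', b)) (up (a', b)) γ) ≤
      Finset.univ.inf' Finset.univ_nonempty (fun b => S (us (a0, b)) (up (a0, b)) γ)

lemma S_const_on_cell {E : Finset ℝ} {c γ γ' x : ℝ} (hx : x ∈ E)
    (hγ : γ ∈ cell E c) (hγ' : γ' ∈ cell E c) (y : ℝ) :
    S x y γ = S x y γ' := by
  obtain ⟨_, hcγ, hγE⟩ := hγ
  obtain ⟨_, hcγ', hγ'E⟩ := hγ'
  unfold S
  by_cases h : x ≤ γ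
  · rw [if_pos h, if_pos ((hγE x hx h).trans hcγ')]
  · rw [if_neg h, if_neg (fun h' => h ((hγ'E x hx h').trans hcγ))]

theorem maxmin_rationalisable_all_or_none {Ai Am : Type*}
    [Fintype Ai] [Nonempty Ai] [Fintype Am] [Nonempty Am]
    (us up : Ai × Am → ℝ) (a0 : Ai)
    (hus : ∀ p, us p ∈ Set.Icc (-1:ℝ) 1) (hup : ∀ p, up p ∈ Set.Icc (-1:ℝ) 1) :
    ∀ I ∈ partitionOf (insert (-1) (Finset.image us Finset.univ)),
      (∀ γ ∈ I, MaxminRationalisable us up a0 γ) ∨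
        (∀ γ ∈ I, ¬ MaxminRationalisable us up a0 γ) := by
  intro I hI
  obtain ⟨c, hc, rfl⟩ := hI
  set E := insert (-1) (Finset.image us Finset.univ) with hE
  have key : ∀ γ ∈ cell E c, ∀ γ' ∈ cell E c,
      MaxminRationalisable us up a0 γ → MaxminRationalisable us up a0 γ' := by
    intro γ hγ γ' hγ' hM a'
    have hfix : ∀ a b, S (us (a, b)) (up (a, b)) γ' = S (us (a, b)) (up (a, b)) γ := by
      intro a b
      exact S_const_on_cell (Finset.mem_insert_of_mem (Finset.mem_image_of_mem us (Finset.mem_univ (a, b)))) hγ' hγ _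
    calc Finset.univ.inf' Finset.univ_nonempty (fun b => S (us (a', b)) (up (a', b)) γ')
        = Finset.univ.inf' Finset.univ_nonempty (fun b => S (us (a', b)) (up (a', b)) γ) := by
          apply Finset.inf'_congr _ rfl; intro b _; exact hfix a' b
      _ ≤ Finset.univ.inf' Finset.univ_nonempty (fun b => S (us (a0, b)) (up (a0, b)) γ) := hM a'
      _ = Finset.univ.inf' Finset.univ_nonempty (fun b => S (us (a0, b)) (up (a0, b)) γ') := by
          apply Finset.inf'_congr _ rfl; intro b _; exact (hfix a0 b).symm
  by_cases h : ∀ γ ∈ cell E c, MaxminRationalisable us up a0 γ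
  · exact Or.inl h
  · push_neg at h
    obtain ⟨γ0, hγ0, hn⟩ := h
    exact Or.inr fun γ hγ hM => hn (key γ hγ γ0 hγ0 hM)
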